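/- arXiv:1902.05635 — 2 statements merged into one kernel-verified Lean document; each statement's English description precedes it below -/
import Mathlib

section
/- Bound on the size of the core (Theorem 1(vi)): if ε > 0, x_i^0 ≥ 0 for every vertex i, and ∑_{i∈V} x_i^0 = 1, then for every time t the number of core vertices satisfies ε · |{i ∈ V : x_i^t > ε}| < 1, i.e. the core has fewer than 1/ε vertices. -/
open Finset

/-! The redistribution step only moves charge: a core vertex keeps half of its excess over `ε`
and splits the other half evenly among its neighbours, so the total charge stays `1` and no
charge becomes negative. A core vertex carries more than `ε`, hence `ε · |core| < 1`. -/

lemma mul_card_filter_lt_lt_sum {ι : Type*} [Fintype ι] (f : ι → ℝ) (ε : ℝ)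
    (hf : ∀ i, 0 ≤ f i) (hpos : 0 < ∑ i, f i) :
    ε * (#{i | ε < f i} : ℝ) < ∑ i, f i := by
  rcases (univ.filter fun i => ε < f i).eq_empty_or_nonempty with hempty | hne
  · simpa [hempty] using hpos
  · calc ε * (#{i | ε < f i} : ℝ) = ∑ i ∈ {i | ε < f i}, ε := by
          rw [sum_const, nsmul_eq_mul, mul_comm]
      _ < ∑ i ∈ {i | ε < f i}, f i :=
          sum_lt_sum_of_nonempty hne fun i hi => (mem_filter.mp hi).2
      _ ≤ ∑ i, f i := sum_le_sum_of_subset_of_nonneg (subset_univ _) fun i _ _ => hf i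

lemma SimpleGraph.sum_sum_neighborFinset {V M : Type*} [Fintype V] [AddCommMonoid M]
    (G : SimpleGraph V) [DecidableRel G.Adj] (f : V → M) :
    ∑ i, ∑ j ∈ G.neighborFinset i, f j = ∑ j, G.degree j • f j := by
  rw [sum_comm' (t' := univ) (s' := fun j => G.neighborFinset j) (by simp [adj_comm])]
  simp only [sum_const, card_neighborFinset_eq_degree]

noncomputable section

namespace ChargeRedistribution

variable {V : Type*}

/-- The `z_i` of the update rule. -/
def coreIndicator (ε : ℝ) (y : V → ℝ) (i : V) : ℝ := if ε < y i then 1 else 0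

def excess (ε : ℝ) (y : V → ℝ) (i : V) : ℝ := coreIndicator ε y i * (y i - ε)

lemma excess_nonneg (ε : ℝ) (y : V → ℝ) (i : V) : 0 ≤ excess ε y i := by
  unfold excess coreIndicator
  split_ifs with h <;> linarith

lemma excess_le_two_mul {ε : ℝ} (hε : 0 ≤ ε) (y : V → ℝ) {i : V} (hy : 0 ≤ y i) :
    excess ε y i ≤ 2 * y i := by
  unfold excess coreIndicator
  split_ifs with h <;> linarith

variable [Fintype V] (G : SimpleGraph V) [DecidableRel G.Adj]

def step (ε : ℝ) (y : V → ℝ) (i : V) : ℝ :=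
  (ε + (y i - ε) / 2) * coreIndicator ε y i + y i * (1 - coreIndicator ε y i)
    + (1 / 2) * ∑ j ∈ G.neighborFinset i, coreIndicator ε y j * (y j - ε) / G.degree j

lemma step_eq (ε : ℝ) (y : V → ℝ) (i : V) :
    step G ε y i
      = y i - excess ε y i / 2 + (1 / 2) * ∑ j ∈ G.neighborFinset i, excess ε y j / G.degree j := by
  unfold step excess
  ring

lemma step_nonneg {ε : ℝ} (hε : 0 ≤ ε) {y : V → ℝ} (hy : ∀ i, 0 ≤ y i) (i : V) :
    0 ≤ step G ε y i := by
  have hsent := excess_le_two_mul hε y (hy i)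
  have hreceived : 0 ≤ ∑ j ∈ G.neighborFinset i, excess ε y j / G.degree j :=
    sum_nonneg fun j _ => div_nonneg (excess_nonneg ε y j) (Nat.cast_nonneg _)
  rw [step_eq]
  linarith

lemma sum_step (hdeg : ∀ i, 0 < G.degree i) (ε : ℝ) (y : V → ℝ) :
    ∑ i, step G ε y i = ∑ i, y i := by
  have hreceived : ∑ i, ∑ j ∈ G.neighborFinset i, excess ε y j / G.degree j
      = ∑ j, excess ε y j := by
    rw [G.sum_sum_neighborFinset]
    refine sum_congr rfl fun j _ => ?_
    have : (G.degree j : ℝ) ≠ 0 := by exact_mod_cast (hdeg j).ne'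
    rw [nsmul_eq_mul, mul_div_cancel₀ _ this]
  simp only [step_eq, sum_add_distrib, sum_sub_distrib, ← mul_sum, ← sum_div, hreceived]
  ring

end ChargeRedistribution

end

open ChargeRedistribution in
theorem core_size_bound_general
    {V : Type*} [Fintype V]
    (G : SimpleGraph V) [DecidableRel G.Adj]
    (hdeg : ∀ i : V, 0 < G.degree i)
    (ε : ℝ) (x : ℕ → V → ℝ)
    (hupd : ∀ (t : ℕ) (i : V),
      x (t + 1) i =
        (ε + (x t i - ε) / 2) * (if ε < x t i then (1 : ℝ) else 0)
          + x t i * (1 - (if ε < x t i then (1 : ℝ) else 0))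
          + (1 / 2) * ∑ j ∈ G.neighborFinset i,
              (if ε < x t j then (1 : ℝ) else 0) * (x t j - ε) / (G.degree j))
    (hε : 0 < ε) (hnn : ∀ i : V, 0 ≤ x 0 i) (hsum : ∑ i, x 0 i = 1) :
    ∀ t : ℕ, ε * ((Finset.univ.filter (fun i : V => ε < x t i)).card : ℝ) < 1 := by
  have hstep (t : ℕ) : x (t + 1) = step G ε (x t) := funext (hupd t)
  have hinv (t : ℕ) : (∀ i, 0 ≤ x t i) ∧ ∑ i, x t i = 1 := by
    induction t with
    | zero => exact ⟨hnn, hsum⟩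
    | succ t ih =>
      rw [hstep]
      exact ⟨step_nonneg G hε.le ih.1, (sum_step G hdeg ε _).trans ih.2⟩
  intro t
  obtain ⟨hnonneg, htotal⟩ := hinv t
  simpa [htotal] using mul_card_filter_lt_lt_sum (x t) ε hnonneg (htotal ▸ one_pos)

/-- **Bound on the size of the core (Theorem 1(vi)).** If `ε > 0`, initial charges are
nonnegative and sum to `1`, then at every time `t` the core `{i : x_i^t > ε}` satisfies
`ε · |core| < 1`, i.e. it has fewer than `1/ε` vertices. -/
theorem core_size_bound
    {V : Type*} [Fintype V] [DecidableEq V]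
    (G : SimpleGraph V) [DecidableRel G.Adj]
    (hdeg : ∀ i : V, 0 < G.degree i)
    (ε : ℝ) (x : ℕ → V → ℝ)
    (hupd : ∀ (t : ℕ) (i : V),
      x (t + 1) i =
        (ε + (x t i - ε) / 2) * (if ε < x t i then (1 : ℝ) else 0)
          + x t i * (1 - (if ε < x t i then (1 : ℝ) else 0))
          + (1 / 2) * ∑ j ∈ G.neighborFinset i,
              (if ε < x t j then (1 : ℝ) else 0) * (x t j - ε) / (G.degree j))
    (hε : 0 < ε) (hnn : ∀ i : V, 0 ≤ x 0 i) (hsum : ∑ i, x 0 i = 1) :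
    ∀ t : ℕ, ε * ((Finset.univ.filter (fun i : V => ε < x t i)).card : ℝ) < 1 :=
  core_size_bound_general G hdeg ε x hupd hε hnn hsum
end

section
/- Small graphs always contain an active vertex (Theorem 1(vii)): if ε ≥ 0 with ε · |V| < 1, x_i^0 ≥ 0 for every vertex i, and ∑_{i∈V} x_i^0 = 1, then for every time t there exists a vertex i with x_i^t > ε; that is, at every time step at least one vertex holds charge exceeding the threshold. -/
/-! The process conserves total charge: a core vertex `i` keeps `ε + (x_i - ε)/2` and splits the
other half of its excess `x_i - ε` equally among its `d_i` neighbours, so every unit that leaves a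
vertex arrives somewhere else. Hence the total charge stays `1` forever, and since `ε · |V| < 1`
it cannot be spread over `V` with every vertex at most `ε`. -/

open Finset

namespace SimpleGraph

variable {V : Type*} [Fintype V] (G : SimpleGraph V) [DecidableRel G.Adj]

theorem sum_sum_neighborFinset_s6 {M : Type*} [AddCommMonoid M] (f : V → M) :
    ∑ i, ∑ j ∈ G.neighborFinset i, f j = ∑ j, G.degree j • f j := by
  simp_rw [neighborFinset_eq_filter, sum_filter]
  rw [sum_comm]
  refine sum_congr rfl fun j _ => ?_
  simp_rw [G.adj_comm _ j, ← sum_filter, sum_const, ← neighborFinset_eq_filter,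
    card_neighborFinset_eq_degree]

theorem sum_sum_neighborFinset_div_degree {K : Type*} [Field K] [CharZero K]
    (hdeg : ∀ i, G.degree i ≠ 0) (f : V → K) :
    ∑ i, ∑ j ∈ G.neighborFinset i, f j / G.degree j = ∑ j, f j := by
  rw [sum_sum_neighborFinset_s6]
  refine sum_congr rfl fun j _ => ?_
  rw [nsmul_eq_mul, mul_div_cancel₀ _ (Nat.cast_ne_zero.mpr (hdeg j))]

noncomputable def chargeStep (ε : ℝ) (y : V → ℝ) (i : V) : ℝ :=
  (ε + (y i - ε) / 2) * (if ε < y i then (1 : ℝ) else 0)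
    + y i * (1 - (if ε < y i then (1 : ℝ) else 0))
    + (1 / 2) * ∑ j ∈ G.neighborFinset i,
        (if ε < y j then (1 : ℝ) else 0) * (y j - ε) / (G.degree j)

theorem sum_chargeStep (hdeg : ∀ i, G.degree i ≠ 0) (ε : ℝ) (y : V → ℝ) :
    ∑ i, G.chargeStep ε y i = ∑ i, y i := by
  set excess : V → ℝ := fun j => (if ε < y j then (1 : ℝ) else 0) * (y j - ε)
  have hstep : ∀ i, G.chargeStep ε y i = y i - excess i / 2
      + 1 / 2 * ∑ j ∈ G.neighborFinset i, excess j / G.degree j := by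
    intro i
    rw [chargeStep]
    by_cases h : ε < y i <;> simp only [excess, h, ↓reduceIte] <;> ring
  simp_rw [hstep, sum_add_distrib, sum_sub_distrib, ← mul_sum,
    G.sum_sum_neighborFinset_div_degree hdeg, ← sum_div]
  ring

end SimpleGraph

theorem exists_active_vertex_general
    {V : Type*} [Fintype V]
    (G : SimpleGraph V) [DecidableRel G.Adj]
    (hdeg : ∀ i : V, 0 < G.degree i)
    (ε : ℝ) (x : ℕ → V → ℝ)
    (hupd : ∀ (t : ℕ) (i : V),
      x (t + 1) i =
        (ε + (x t i - ε) / 2) * (if ε < x t i then (1 : ℝ) else 0)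
          + x t i * (1 - (if ε < x t i then (1 : ℝ) else 0))
          + (1 / 2) * ∑ j ∈ G.neighborFinset i,
              (if ε < x t j then (1 : ℝ) else 0) * (x t j - ε) / (G.degree j))
    (hsmall : ε * (Fintype.card V : ℝ) < 1)
    (hsum : ∑ i, x 0 i = 1) :
    ∀ t : ℕ, ∃ i : V, ε < x t i := by
  have hmass : ∀ t, ∑ i, x t i = 1 := by
    intro t
    induction t with
    | zero => exact hsum
    | succ t ih =>
      rw [show x (t + 1) = G.chargeStep ε (x t) from funext (hupd t),
        G.sum_chargeStep (fun i => (hdeg i).ne') ε (x t), ih]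
  intro t
  obtain ⟨i, -, hi⟩ := exists_lt_of_sum_lt (s := univ) (f := fun _ => ε) (g := x t) <| by
    rw [hmass t, sum_const, card_univ, nsmul_eq_mul, mul_comm]
    exact hsmall
  exact ⟨i, hi⟩

/-- **Small graphs always contain an active vertex (Theorem 1(vii)).** If `ε ≥ 0` with
`ε · |V| < 1`, initial charges are nonnegative and sum to `1`, then at every time `t` some
vertex holds charge exceeding the threshold `ε`. -/
theorem exists_active_vertex
    {V : Type*} [Fintype V] [DecidableEq V]
    (G : SimpleGraph V) [DecidableRel G.Adj]
    (hdeg : ∀ i : V, 0 < G.degree i)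
    (ε : ℝ) (x : ℕ → V → ℝ)
    (hupd : ∀ (t : ℕ) (i : V),
      x (t + 1) i =
        (ε + (x t i - ε) / 2) * (if ε < x t i then (1 : ℝ) else 0)
          + x t i * (1 - (if ε < x t i then (1 : ℝ) else 0))
          + (1 / 2) * ∑ j ∈ G.neighborFinset i,
              (if ε < x t j then (1 : ℝ) else 0) * (x t j - ε) / (G.degree j))
    (hε : 0 ≤ ε) (hsmall : ε * (Fintype.card V : ℝ) < 1)
    (hnn : ∀ i : V, 0 ≤ x 0 i) (hsum : ∑ i, x 0 i = 1) :
    ∀ t : ℕ, ∃ i : V, ε < x t i :=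
  exists_active_vertex_general G hdeg ε x hupd hsmall hsum
end
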